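/- Let C be an arc in K² with at least two points that consists only of pure points, and let z and w be its endpoints. Then Γ⁻¹(C) is a 4-path in ℤ² with 4-endpoints Γ⁻¹(z) and Γ⁻¹(w). -/
import Mathlib


open TopologicalSpace

/-- Basic (minimal) neighborhoods generating the Khalimsky topology on ℤ. -/
def khN (n : ℤ) : Set ℤ := if Odd n then {n} else {n - 1, n, n + 1}

/-- The Khalimsky (digital) topology on the integers. -/
def khLine : TopologicalSpace ℤ := generateFrom (Set.range khN)

/-- The Khalimsky topology on the digital plane ℤ × ℤ (product topology). -/
def khPlane : TopologicalSpace (ℤ × ℤ) :=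
  @instTopologicalSpaceProd ℤ ℤ khLine khLine

/-- A point of the digital plane is pure if both coordinates have the same parity. -/
def IsPure (p : ℤ × ℤ) : Prop := p.1 % 2 = p.2 % 2

/-- A point of the digital plane is mixed if it is not pure. -/
def IsMixed (p : ℤ × ℤ) : Prop := ¬ IsPure p

/-- A closed (pure) point: both coordinates even. -/
def IsClosedPt (p : ℤ × ℤ) : Prop := Even p.1 ∧ Even p.2

/-- An open (pure) point: both coordinates odd. -/
def IsOpenPt (p : ℤ × ℤ) : Prop := Odd p.1 ∧ Odd p.2

/-- The minimal open neighborhood N(x) of a point in the digital plane. -/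
def minN (x : ℤ × ℤ) : Set (ℤ × ℤ) := ⋂₀ {U : Set (ℤ × ℤ) | khPlane.IsOpen U ∧ x ∈ U}

/-- The closure cl(x) of a singleton in the digital plane. -/
def clPt (x : ℤ × ℤ) : Set (ℤ × ℤ) := @closure (ℤ × ℤ) khPlane {x}

/-- The adjacency set A(x) of a point of the digital plane. -/
def AdjSet (x : ℤ × ℤ) : Set (ℤ × ℤ) :=
  {y | y ≠ x ∧ @IsConnected (ℤ × ℤ) khPlane {x, y}}

/-- An arc: a subset of the digital plane homeomorphic (in the subspace topology)
to a finite interval of the Khalimsky line. -/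
def IsArc (C : Set (ℤ × ℤ)) : Prop :=
  ∃ a b : ℤ,
    Nonempty (@Homeomorph (↥C) (↥(Set.Icc a b))
      (TopologicalSpace.induced Subtype.val khPlane)
      (TopologicalSpace.induced Subtype.val khLine))

/-- z is an endpoint of the arc C: it has exactly one adjacent point within C. -/
def IsEndpointOf (z : ℤ × ℤ) (C : Set (ℤ × ℤ)) : Prop :=
  z ∈ C ∧ (AdjSet z ∩ C).encard = 1

/-- A Jordan curve in the digital plane. -/
def IsJordanCurve (J : Set (ℤ × ℤ)) : Prop :=
  @IsConnected (ℤ × ℤ) khPlane J ∧ 4 ≤ J.encard ∧ ∀ x ∈ J, IsArc (J \ {x})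

/-- The slant embedding Γ(x,y) = (x+y, y−x) of the Rosenfeld plane into the digital plane. -/
def Γmap (p : ℤ × ℤ) : ℤ × ℤ := (p.1 + p.2, p.2 - p.1)

/-- The operator Γ* turning subsets of ℤ² into subsets of the digital plane. -/
def ΓStar (A : Set (ℤ × ℤ)) : Set (ℤ × ℤ) :=
  Γmap '' A ∪
    {x | IsMixed x ∧ (minN x ⊆ Γmap '' A ∪ {x} ∨ clPt x ⊆ Γmap '' A ∪ {x})}

/-- 8-adjacency in ℤ². -/
def Adj8 (p q : ℤ × ℤ) : Prop := p ≠ q ∧ |p.1 - q.1| ≤ 1 ∧ |p.2 - q.2| ≤ 1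

/-- 4-adjacency in ℤ². -/
def Adj4 (p q : ℤ × ℤ) : Prop := p ≠ q ∧ |p.1 - q.1| + |p.2 - q.2| = 1

/-- The 8-neighbours of x within C. -/
def nbrs8 (C : Set (ℤ × ℤ)) (x : ℤ × ℤ) : Set (ℤ × ℤ) := {y ∈ C | Adj8 x y}

/-- The 4-neighbours of x within C. -/
def nbrs4 (C : Set (ℤ × ℤ)) (x : ℤ × ℤ) : Set (ℤ × ℤ) := {y ∈ C | Adj4 x y}

/-- x is an 8-endpoint of C. -/
def Is8Endpoint (C : Set (ℤ × ℤ)) (x : ℤ × ℤ) : Prop :=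
  x ∈ C ∧ (nbrs8 C x).encard = 1

/-- x is a 4-endpoint of C. -/
def Is4Endpoint (C : Set (ℤ × ℤ)) (x : ℤ × ℤ) : Prop :=
  x ∈ C ∧ (nbrs4 C x).encard = 1

/-- An 8-path: a finite set with exactly two 8-endpoints, every other point
having exactly two 8-adjacent points in the set. -/
def Is8Path (C : Set (ℤ × ℤ)) : Prop :=
  C.Finite ∧ {x | Is8Endpoint C x}.encard = 2 ∧
    ∀ x ∈ C, ¬ Is8Endpoint C x → (nbrs8 C x).encard = 2

/-- A 4-path. -/
def Is4Path (C : Set (ℤ × ℤ)) : Prop :=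
  C.Finite ∧ {x | Is4Endpoint C x}.encard = 2 ∧
    ∀ x ∈ C, ¬ Is4Endpoint C x → (nbrs4 C x).encard = 2

/-- A closed 8-curve: every point has exactly two 8-adjacent points in the set. -/
def Is8ClosedCurve (C : Set (ℤ × ℤ)) : Prop :=
  C.Finite ∧ ∀ x ∈ C, (nbrs8 C x).encard = 2

/-- A closed 4-curve. -/
def Is4ClosedCurve (C : Set (ℤ × ℤ)) : Prop :=
  C.Finite ∧ ∀ x ∈ C, (nbrs4 C x).encard = 2

/-- 8-connectedness: there is no partition into two nonempty pieces that are
not 8-adjacent to each other. -/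
def Conn8 (S : Set (ℤ × ℤ)) : Prop :=
  ¬ ∃ A B : Set (ℤ × ℤ), A.Nonempty ∧ B.Nonempty ∧ A ∪ B = S ∧ A ∩ B = ∅ ∧
      ∀ a ∈ A, ∀ b ∈ B, ¬ Adj8 a b

/-- 4-connectedness. -/
def Conn4 (S : Set (ℤ × ℤ)) : Prop :=
  ¬ ∃ A B : Set (ℤ × ℤ), A.Nonempty ∧ B.Nonempty ∧ A ∪ B = S ∧ A ∩ B = ∅ ∧
      ∀ a ∈ A, ∀ b ∈ B, ¬ Adj4 a b

/-- T is a 4-component of S: a maximal 4-connected subset of S. -/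
def Is4CompOf (T S : Set (ℤ × ℤ)) : Prop :=
  T ⊆ S ∧ Conn4 T ∧ ∀ T' : Set (ℤ × ℤ), T ⊆ T' → T' ⊆ S → Conn4 T' → T' = T

/-- U is a connected component of S in the digital plane. -/
def IsCompOf (U S : Set (ℤ × ℤ)) : Prop :=
  ∃ x ∈ S, @connectedComponentIn (ℤ × ℤ) khPlane S x = U

/-- The set S_J of mixed points of Γ*(Γ⁻¹(J)) having exactly three adjacent points in J. -/
def SJ (J : Set (ℤ × ℤ)) : Set (ℤ × ℤ) :=
  {m | m ∈ ΓStar (Γmap ⁻¹' J) ∧ IsMixed m ∧ (AdjSet m ∩ J).encard = 3}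

lemma khN_isOpen (n : ℤ) : khLine.IsOpen (khN n) :=
  TopologicalSpace.GenerateOpen.basic _ ⟨n, rfl⟩

lemma khLine_singleton_isOpen {n : ℤ} (hn : Odd n) : khLine.IsOpen {n} := by
  have : khN n = {n} := by simp [khN, hn]
  exact this ▸ khN_isOpen n

lemma khLine_even_mem {n : ℤ} (hn : Even n) :
    ∀ {A : Set ℤ}, khLine.IsOpen A → n ∈ A → n - 1 ∈ A ∧ n + 1 ∈ A := by
  intro A hA
  have hA' : TopologicalSpace.GenerateOpen (Set.range khN) A := hA
  induction hA' with
  | basic s hs =>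
    intro hmem
    obtain ⟨m, rfl⟩ := hs
    by_cases hm : Odd m
    · simp only [khN, if_pos hm, Set.mem_singleton_iff] at hmem
      exact absurd (hmem ▸ hn) (Int.not_even_iff_odd.mpr hm)
    · have hme : Even m := Int.not_odd_iff_even.mp hm
      simp only [khN, if_neg hm, Set.mem_insert_iff, Set.mem_singleton_iff] at hmem ⊢
      rw [Int.even_iff] at hn hme
      omega
  | univ => intro _; exact ⟨trivial, trivial⟩
  | inter s t hs ht ihs iht =>
    intro hmem
    exact ⟨⟨(ihs hs hmem.1).1, (iht ht hmem.2).1⟩, ⟨(ihs hs hmem.1).2, (iht ht hmem.2).2⟩⟩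
  | sUnion S hS ih =>
    rintro ⟨s, hs, hmem⟩
    exact ⟨⟨s, hs, (ih s hs (hS s hs) hmem).1⟩, ⟨s, hs, (ih s hs (hS s hs) hmem).2⟩⟩

lemma khPlane_square_isOpen (x : ℤ × ℤ) : khPlane.IsOpen (khN x.1 ×ˢ khN x.2) := by
  letI : TopologicalSpace ℤ := khLine
  show IsOpen (khN x.1 ×ˢ khN x.2)
  exact IsOpen.prod (khN_isOpen x.1) (khN_isOpen x.2)

lemma khPlane_singleton_isOpen {x : ℤ × ℤ} (h1 : Odd x.1) (h2 : Odd x.2) :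
    khPlane.IsOpen {x} := by
  have : ({x} : Set (ℤ × ℤ)) = khN x.1 ×ˢ khN x.2 := by
    simp only [khN, if_pos h1, if_pos h2, Set.singleton_prod_singleton]
  exact this ▸ khPlane_square_isOpen x

lemma khPlane_even_mem {U : Set (ℤ × ℤ)} (hU : khPlane.IsOpen U) {x : ℤ × ℤ}
    (hx : x ∈ U) (h1 : Even x.1) (h2 : Even x.2) (d : ℤ × ℤ)
    (hd1 : -1 ≤ d.1 ∧ d.1 ≤ 1) (hd2 : -1 ≤ d.2 ∧ d.2 ≤ 1) :
    (x.1 + d.1, x.2 + d.2) ∈ U := by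
  letI : TopologicalSpace ℤ := khLine
  have hU' : IsOpen U := hU
  obtain ⟨u, v, hu, hv, hxu, hxv, hsub⟩ := isOpen_prod_iff.mp hU' x.1 x.2 (by
    have : (x.1, x.2) = x := rfl
    rw [this]; exact hx)
  have h1' := khLine_even_mem h1 hu hxu
  have h2' := khLine_even_mem h2 hv hxv
  apply hsub
  refine ⟨?_, ?_⟩
  · show x.1 + d.1 ∈ u
    rcases (by omega : d.1 = -1 ∨ d.1 = 0 ∨ d.1 = 1) with h | h | h
    · rw [(by omega : x.1 + d.1 = x.1 - 1)]; exact h1'.1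
    · rw [(by omega : x.1 + d.1 = x.1)]; exact hxu
    · rw [h]; exact h1'.2
  · show x.2 + d.2 ∈ v
    rcases (by omega : d.2 = -1 ∨ d.2 = 0 ∨ d.2 = 1) with h | h | h
    · rw [(by omega : x.2 + d.2 = x.2 - 1)]; exact h2'.1
    · rw [(by omega : x.2 + d.2 = x.2)]; exact hxv
    · rw [h]; exact h2'.2

lemma sep_not_conn {X : Type*} [TopologicalSpace X] {x y : X} {U V : Set X}
    (hU : IsOpen U) (hV : IsOpen V) (hxU : x ∈ U) (hyU : y ∉ U) (hyV : y ∈ V)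
    (hxV : x ∉ V) : ¬ IsConnected ({x, y} : Set X) := by
  intro h
  obtain ⟨p, hp, hpU, hpV⟩ := h.isPreconnected U V hU hV
    (by rintro p (rfl | rfl); exacts [Or.inl hxU, Or.inr hyV])
    ⟨x, Or.inl rfl, hxU⟩ ⟨y, Or.inr rfl, hyV⟩
  rcases hp with rfl | rfl
  · exact hxV hpV
  · exact hyU hpU

lemma dominated_conn {X : Type*} [TopologicalSpace X] {x y : X}
    (h : ∀ U : Set X, IsOpen U → x ∈ U → y ∈ U) : IsConnected ({x, y} : Set X) := by
  refine ⟨⟨x, Or.inl rfl⟩, ?_⟩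
  rintro u v hu hv hcov ⟨p, hp, hpu⟩ ⟨q, hq, hqv⟩
  have hyu : y ∈ u := by rcases hp with rfl | rfl; exacts [h u hu hpu, hpu]
  have hyv : y ∈ v := by rcases hq with rfl | rfl; exacts [h v hv hqv, hqv]
  exact ⟨y, Or.inr rfl, hyu, hyv⟩

lemma line_pair_conn {m n : ℤ} (hne : m ≠ n) :
    @IsConnected ℤ khLine {m, n} ↔ |m - n| = 1 := by
  letI : TopologicalSpace ℤ := khLine
  rw [abs_eq (by norm_num : (0:ℤ) ≤ 1)]
  constructor
  · intro hconn
    by_contra hnd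
    have sep : ∀ p q : ℤ, p ≠ q → ¬(p - q = 1 ∨ p - q = -1) →
        ∃ O : Set ℤ, IsOpen O ∧ p ∈ O ∧ q ∉ O := by
      intro p q hpq hnd'
      by_cases hp : Odd p
      · exact ⟨{p}, khLine_singleton_isOpen hp, rfl, fun h => hpq (Set.mem_singleton_iff.mp h).symm⟩
      · refine ⟨khN p, khN_isOpen p, ?_, ?_⟩
        · simp [khN, hp]
        · simp only [khN, if_neg hp, Set.mem_insert_iff, Set.mem_singleton_iff]
          push_neg
          omega
    obtain ⟨O1, hO1, hm1, hn1⟩ := sep m n hne hnd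
    obtain ⟨O2, hO2, hn2, hm2⟩ := sep n m (Ne.symm hne) (by omega)
    exact sep_not_conn hO1 hO2 hm1 hn1 hn2 hm2 hconn
  · intro hd
    by_cases hm : Even m
    · apply dominated_conn
      intro U hU hmU
      have := khLine_even_mem hm hU hmU
      rcases hd with h | h
      · rw [(by omega : n = m - 1)]; exact this.1
      · rw [(by omega : n = m + 1)]; exact this.2
    · rw [Set.pair_comm]
      apply dominated_conn
      intro U hU hnU
      have hne' : Even n := by
        rw [Int.even_iff]
        have := Int.not_even_iff_odd.mp hm
        rw [Int.odd_iff] at this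
        omega
      have := khLine_even_mem hne' hU hnU
      rcases hd with h | h
      · rw [(by omega : m = n + 1)]; exact this.2
      · rw [(by omega : m = n - 1)]; exact this.1

lemma pure_pair_conn {x y : ℤ × ℤ} (hx : IsPure x) (hy : IsPure y) (hne : x ≠ y) :
    @IsConnected (ℤ × ℤ) khPlane {x, y} ↔ (|x.1 - y.1| = 1 ∧ |x.2 - y.2| = 1) := by
  letI : TopologicalSpace (ℤ × ℤ) := khPlane
  unfold IsPure at hx hy
  have hnexy : ¬ (x.1 = y.1 ∧ x.2 = y.2) := by
    intro ⟨h1, h2⟩; exact hne (Prod.ext h1 h2)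
  rw [abs_eq (by norm_num : (0:ℤ) ≤ 1), abs_eq (by norm_num : (0:ℤ) ≤ 1)]
  constructor
  · intro hconn
    by_contra hnd
    have sep : ∀ p q : ℤ × ℤ, p.1 % 2 = p.2 % 2 → q.1 % 2 = q.2 % 2 →
        ¬ (p.1 = q.1 ∧ p.2 = q.2) →
        ¬ (((p.1 - q.1 = 1 ∨ p.1 - q.1 = -1)) ∧ ((p.2 - q.2 = 1 ∨ p.2 - q.2 = -1))) →
        ∃ O : Set (ℤ × ℤ), IsOpen O ∧ p ∈ O ∧ q ∉ O := by
      intro p q hp hq hpq hnd'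
      by_cases hodd : Odd p.1
      · have hodd2 : Odd p.2 := by
          rw [Int.odd_iff] at hodd ⊢; omega
        refine ⟨{p}, khPlane_singleton_isOpen hodd hodd2, rfl, ?_⟩
        intro h
        rw [Set.mem_singleton_iff] at h
        exact hpq ⟨(congrArg Prod.fst h).symm, (congrArg Prod.snd h).symm⟩
      · have hev : p.1 % 2 = 0 := by
          have := Int.not_odd_iff_even.mp hodd; rwa [Int.even_iff] at this
        refine ⟨khN p.1 ×ˢ khN p.2, khPlane_square_isOpen p, ?_, ?_⟩
        · refine ⟨?_, ?_⟩ <;>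
          · simp only [khN, Int.odd_iff]
            rw [if_neg (by omega)]
            simp
        · intro ⟨h1, h2⟩
          simp only [khN, Int.odd_iff, if_neg (by omega : ¬ p.1 % 2 = 1),
            if_neg (by omega : ¬ p.2 % 2 = 1), Set.mem_insert_iff,
            Set.mem_singleton_iff] at h1 h2
          omega
    obtain ⟨O1, hO1, hm1, hn1⟩ := sep x y hx hy hnexy hnd
    obtain ⟨O2, hO2, hn2, hm2⟩ := sep y x hy hx (by omega) (by omega)
    exact sep_not_conn hO1 hO2 hm1 hn1 hn2 hm2 hconn
  · intro ⟨hd1, hd2⟩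
    by_cases hm : Even x.1
    · apply dominated_conn
      intro U hU hxU
      have h2 : Even x.2 := by
        rw [Int.even_iff] at hm ⊢; omega
      have := khPlane_even_mem hU hxU hm h2 (y.1 - x.1, y.2 - x.2)
        (by constructor <;> omega) (by constructor <;> omega)
      have e : (x.1 + (y.1 - x.1, y.2 - x.2).1, x.2 + (y.1 - x.1, y.2 - x.2).2) = y := by
        apply Prod.ext <;> simp <;> ring
      rwa [e] at this
    · rw [Set.pair_comm]
      apply dominated_conn
      intro U hU hyU
      have hm1 : Even y.1 := by
        have := Int.not_even_iff_odd.mp hm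
        rw [Int.odd_iff] at this
        rw [Int.even_iff]
        omega
      have hm2 : Even y.2 := by
        rw [Int.even_iff] at hm1 ⊢; omega
      have := khPlane_even_mem hU hyU hm1 hm2 (x.1 - y.1, x.2 - y.2)
        (by constructor <;> omega) (by constructor <;> omega)
      have e : (y.1 + (x.1 - y.1, x.2 - y.2).1, y.2 + (x.1 - y.1, x.2 - y.2).2) = x := by
        apply Prod.ext <;> simp <;> ring
      rwa [e] at this

lemma inducing_isConnected_image {X Y : Type*} [TopologicalSpace X] [TopologicalSpace Y]
    {f : X → Y} (hf : Topology.IsInducing f) (s : Set X) :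
    IsConnected (f '' s) ↔ IsConnected s := by
  unfold IsConnected
  rw [hf.isPreconnected_image, Set.image_nonempty]

lemma conn_transfer (C : Set (ℤ × ℤ)) {a b : ℤ}
    (h : @Homeomorph (↥C) (↥(Set.Icc a b))
      (TopologicalSpace.induced Subtype.val khPlane)
      (TopologicalSpace.induced Subtype.val khLine))
    (x y : ↥C) :
    @IsConnected (ℤ × ℤ) khPlane {(x : ℤ × ℤ), (y : ℤ × ℤ)} ↔
      @IsConnected ℤ khLine {(h x : ℤ), (h y : ℤ)} := by
  letI : TopologicalSpace (ℤ × ℤ) := khPlane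
  letI : TopologicalSpace ℤ := khLine
  letI : TopologicalSpace ↥C := TopologicalSpace.induced Subtype.val khPlane
  letI : TopologicalSpace ↥(Set.Icc a b) := TopologicalSpace.induced Subtype.val khLine
  have hiC : Topology.IsInducing (Subtype.val : ↥C → ℤ × ℤ) :=
    Topology.IsInducing.subtypeVal
  have hiI : Topology.IsInducing (Subtype.val : ↥(Set.Icc a b) → ℤ) :=
    Topology.IsInducing.subtypeVal
  have e1 : ({(x : ℤ × ℤ), (y : ℤ × ℤ)} : Set (ℤ × ℤ)) = Subtype.val '' {x, y} :=
    (Set.image_pair _ _ _).symm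
  have e2 : ({(h x : ℤ), (h y : ℤ)} : Set ℤ) = Subtype.val '' (h '' {x, y}) := by
    rw [Set.image_pair, Set.image_pair]
  rw [e1, e2]
  have A := inducing_isConnected_image hiC ({x, y} : Set ↥C)
  have B := inducing_isConnected_image hiI (h '' {x, y})
  have Cc := inducing_isConnected_image h.isInducing ({x, y} : Set ↥C)
  exact A.trans (Cc.symm.trans B.symm)

lemma Γinj : Function.Injective Γmap := by
  intro p q hpq
  have h1 := congrArg Prod.fst hpq
  have h2 := congrArg Prod.snd hpq
  simp only [Γmap] at h1 h2
  exact Prod.ext (by omega) (by omega)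

lemma Γpure (p : ℤ × ℤ) : IsPure (Γmap p) := by
  simp only [IsPure, Γmap]
  omega

lemma Γsurj {x : ℤ × ℤ} (hx : IsPure x) : ∃ p, Γmap p = x := by
  unfold IsPure at hx
  refine ⟨((x.1 - x.2) / 2, (x.1 + x.2) / 2), Prod.ext ?_ ?_⟩ <;>
    simp only [Γmap] <;> omega

lemma Γadj (p q : ℤ × ℤ) :
    (|(Γmap p).1 - (Γmap q).1| = 1 ∧ |(Γmap p).2 - (Γmap q).2| = 1) ↔
      (p ≠ q ∧ |p.1 - q.1| + |p.2 - q.2| = 1) := by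
  simp only [Γmap, Int.abs_eq_natAbs, Ne, Prod.ext_iff, not_and]
  omega

lemma encard_interval {a b k : ℤ} (hab : a < b) (hk : a ≤ k ∧ k ≤ b) :
    {n : ℤ | n ∈ Set.Icc a b ∧ |n - k| = 1}.encard = if k = a ∨ k = b then 1 else 2 := by
  split_ifs with h
  · rcases h with rfl | rfl
    · have : {n : ℤ | n ∈ Set.Icc k b ∧ |n - k| = 1} = {k + 1} := by
        ext n
        simp only [Set.mem_setOf_eq, Set.mem_Icc, Set.mem_singleton_iff, Int.abs_eq_natAbs]
        omega
      rw [this, Set.encard_singleton]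
    · have : {n : ℤ | n ∈ Set.Icc a k ∧ |n - k| = 1} = {k - 1} := by
        ext n
        simp only [Set.mem_setOf_eq, Set.mem_Icc, Set.mem_singleton_iff, Int.abs_eq_natAbs]
        omega
      rw [this, Set.encard_singleton]
  · push_neg at h
    have : {n : ℤ | n ∈ Set.Icc a b ∧ |n - k| = 1} = {k - 1, k + 1} := by
      ext n
      simp only [Set.mem_setOf_eq, Set.mem_Icc, Set.mem_insert_iff, Set.mem_singleton_iff,
        Int.abs_eq_natAbs]
      omega
    rw [this, Set.encard_pair (by omega)]

/-- If C is an arc in the digital plane with at least two points consisting only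
of pure points and with endpoints z and w, then Γ⁻¹(C) is a 4-path in ℤ²
with 4-endpoints Γ⁻¹(z) and Γ⁻¹(w). -/
theorem preimage_of_pure_arc_is4Path (C : Set (ℤ × ℤ)) (z w : ℤ × ℤ)
    (harc : IsArc C) (hcard : 2 ≤ C.encard) (hpure : ∀ x ∈ C, IsPure x)
    (hzw : z ≠ w) (hz : IsEndpointOf z C) (hw : IsEndpointOf w C) :
    Is4Path (Γmap ⁻¹' C) ∧
      (∀ p : ℤ × ℤ, Γmap p = z → Is4Endpoint (Γmap ⁻¹' C) p) ∧
      (∀ p : ℤ × ℤ, Γmap p = w → Is4Endpoint (Γmap ⁻¹' C) p) := by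
  classical
  obtain ⟨a, b, ⟨h⟩⟩ := harc
  letI : TopologicalSpace (ℤ × ℤ) := khPlane
  letI : TopologicalSpace ℤ := khLine
  letI : TopologicalSpace ↥C := TopologicalSpace.induced Subtype.val khPlane
  letI : TopologicalSpace ↥(Set.Icc a b) := TopologicalSpace.induced Subtype.val khLine
  set m : ↥C → ℤ := fun x => (h x : ℤ) with hm
  have hm_mem : ∀ x : ↥C, a ≤ m x ∧ m x ≤ b := fun x => Set.mem_Icc.mp (h x).2
  have hm_inj : Function.Injective m := fun x y hxy => h.injective (Subtype.ext hxy)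
  have key : ∀ x y : ↥C, (x : ℤ × ℤ) ≠ (y : ℤ × ℤ) →
      (@IsConnected (ℤ × ℤ) khPlane {(x : ℤ × ℤ), (y : ℤ × ℤ)} ↔ |m x - m y| = 1) := by
    intro x y hne
    rw [conn_transfer C h x y]
    exact line_pair_conn (fun e => hne (congrArg Subtype.val (hm_inj e)))
  have hAdj : ∀ x : ↥C, (AdjSet ↑x ∩ C).encard =
      ({n : ℤ | n ∈ Set.Icc a b ∧ |n - m x| = 1}).encard := by
    intro x
    set G : ℤ × ℤ → ℤ := fun y => if hy : y ∈ C then m ⟨y, hy⟩ else a - 2 with hG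
    have hGinj : Set.InjOn G (AdjSet ↑x ∩ C) := by
      intro p hp q hq hpq
      simp only [hG, dif_pos hp.2, dif_pos hq.2] at hpq
      exact congrArg Subtype.val (hm_inj hpq)
    have himg : G '' (AdjSet ↑x ∩ C) = {n : ℤ | n ∈ Set.Icc a b ∧ |n - m x| = 1} := by
      ext n
      constructor
      · rintro ⟨y, ⟨⟨hyne, hyconn⟩, hyC⟩, rfl⟩
        simp only [hG, dif_pos hyC]
        refine ⟨(h ⟨y, hyC⟩).2, ?_⟩
        rw [abs_sub_comm]
        exact (key x ⟨y, hyC⟩ hyne.symm).mp hyconn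
      · rintro ⟨hnIcc, hnd⟩
        set y := h.symm ⟨n, hnIcc⟩ with hy
        have hmy : m y = n := by
          show (h (h.symm ⟨n, hnIcc⟩) : ℤ) = n
          rw [h.apply_symm_apply]
        have hne : (y : ℤ × ℤ) ≠ (x : ℤ × ℤ) := by
          intro e
          have : y = x := Subtype.ext e
          rw [Int.abs_eq_natAbs] at hnd
          rw [this] at hmy
          omega
        refine ⟨(y : ℤ × ℤ), ⟨⟨hne, ?_⟩, y.2⟩, ?_⟩
        · refine (key x y hne.symm).mpr ?_
          rw [abs_sub_comm, hmy]
          exact hnd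
        · show (if hy : (y : ℤ × ℤ) ∈ C then m ⟨(y : ℤ × ℤ), hy⟩ else a - 2) = n
          rw [dif_pos y.2]
          rw [← hmy]
    rw [← himg, hGinj.encard_image]
  have hmzw : m ⟨z, hz.1⟩ ≠ m ⟨w, hw.1⟩ := by
    intro e
    exact hzw (congrArg Subtype.val (hm_inj e))
  have hab : a < b := by
    have h1 := hm_mem ⟨z, hz.1⟩
    have h2 := hm_mem ⟨w, hw.1⟩
    omega
  have hE : ∀ x : ↥C, (AdjSet ↑x ∩ C).encard = if m x = a ∨ m x = b then 1 else 2 := by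
    intro x
    rw [hAdj x]
    exact encard_interval hab (hm_mem x)
  have hza : m ⟨z, hz.1⟩ = a ∨ m ⟨z, hz.1⟩ = b := by
    by_contra hcon
    have hEz : (AdjSet z ∩ C).encard =
        if m ⟨z, hz.1⟩ = a ∨ m ⟨z, hz.1⟩ = b then 1 else 2 := hE ⟨z, hz.1⟩
    rw [if_neg hcon] at hEz
    rw [hz.2] at hEz
    exact absurd hEz (by decide)
  have hwa : m ⟨w, hw.1⟩ = a ∨ m ⟨w, hw.1⟩ = b := by
    by_contra hcon
    have hEw : (AdjSet w ∩ C).encard =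
        if m ⟨w, hw.1⟩ = a ∨ m ⟨w, hw.1⟩ = b then 1 else 2 := hE ⟨w, hw.1⟩
    rw [if_neg hcon] at hEw
    rw [hw.2] at hEw
    exact absurd hEw (by decide)
  have hclass : ∀ x : ↥C, (m x = a ∨ m x = b) ↔ ((x : ℤ × ℤ) = z ∨ (x : ℤ × ℤ) = w) := by
    intro x
    constructor
    · intro hx
      have hor : m x = m ⟨z, hz.1⟩ ∨ m x = m ⟨w, hw.1⟩ := by omega
      rcases hor with hor | hor
      · exact Or.inl (congrArg Subtype.val (hm_inj hor))
      · exact Or.inr (congrArg Subtype.val (hm_inj hor))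
    · rintro (hxz | hxz)
      · have : x = ⟨z, hz.1⟩ := Subtype.ext hxz
        rw [this]
        exact hza
      · have : x = ⟨w, hw.1⟩ := Subtype.ext hxz
        rw [this]
        exact hwa
  have hnbrs : ∀ p : ℤ × ℤ, Γmap p ∈ C →
      (nbrs4 (Γmap ⁻¹' C) p).encard = (AdjSet (Γmap p) ∩ C).encard := by
    intro p hp
    have himg : Γmap '' (nbrs4 (Γmap ⁻¹' C) p) = AdjSet (Γmap p) ∩ C := by
      ext y
      constructor
      · rintro ⟨q, ⟨hqC, hq4⟩, rfl⟩
        refine ⟨⟨fun e => hq4.1 (Γinj e).symm, ?_⟩, hqC⟩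
        have hd := (Γadj p q).mpr ⟨hq4.1, hq4.2⟩
        exact (pure_pair_conn (Γpure p) (Γpure q) (fun e => hq4.1 (Γinj e))).mpr hd
      · rintro ⟨⟨hyne, hyconn⟩, hyC⟩
        obtain ⟨q, rfl⟩ := Γsurj (hpure _ hyC)
        refine ⟨q, ⟨hyC, ?_⟩, rfl⟩
        have hne : Γmap p ≠ Γmap q := fun e => hyne e.symm
        have hd := (pure_pair_conn (Γpure p) (Γpure q) hne).mp hyconn
        have h4 := (Γadj p q).mp hd
        exact ⟨h4.1, h4.2⟩
    rw [← himg, (Γinj.injOn).encard_image]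
  have hend : ∀ p : ℤ × ℤ, Is4Endpoint (Γmap ⁻¹' C) p ↔ (Γmap p = z ∨ Γmap p = w) := by
    intro p
    constructor
    · rintro ⟨hpC, hp1⟩
      have hpC' : Γmap p ∈ C := hpC
      rw [hnbrs p hpC'] at hp1
      have hEp : (AdjSet (Γmap p) ∩ C).encard =
          if m ⟨Γmap p, hpC'⟩ = a ∨ m ⟨Γmap p, hpC'⟩ = b then 1 else 2 := hE ⟨Γmap p, hpC'⟩
      rw [hp1] at hEp
      have hor : m ⟨Γmap p, hpC'⟩ = a ∨ m ⟨Γmap p, hpC'⟩ = b := by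
        by_contra hcon
        rw [if_neg hcon] at hEp
        exact absurd hEp (by decide)
      exact (hclass ⟨Γmap p, hpC'⟩).mp hor
    · rintro (he | he)
      · refine ⟨by show Γmap p ∈ C; rw [he]; exact hz.1, ?_⟩
        rw [hnbrs p (by rw [he]; exact hz.1), he]
        exact hz.2
      · refine ⟨by show Γmap p ∈ C; rw [he]; exact hw.1, ?_⟩
        rw [hnbrs p (by rw [he]; exact hw.1), he]
        exact hw.2
  obtain ⟨pz, hpz⟩ := Γsurj (hpure z hz.1)
  obtain ⟨pw, hpw⟩ := Γsurj (hpure w hw.1)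
  have hpzw : pz ≠ pw := by
    intro e
    exact hzw (by rw [← hpz, ← hpw, e])
  have hset : {x | Is4Endpoint (Γmap ⁻¹' C) x} = {pz, pw} := by
    ext p
    simp only [Set.mem_setOf_eq, hend p, Set.mem_insert_iff, Set.mem_singleton_iff]
    constructor
    · rintro (he | he)
      · exact Or.inl (Γinj (by rw [hpz, he]))
      · exact Or.inr (Γinj (by rw [hpw, he]))
    · rintro (rfl | rfl)
      · exact Or.inl hpz
      · exact Or.inr hpw
  have hfinC : C.Finite := by
    have h1 : Finite ↥(Set.Icc a b) := (Set.finite_Icc a b).to_subtype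
    have h2 : Finite ↥C := Finite.of_equiv _ h.toEquiv.symm
    exact Set.finite_coe_iff.mp h2
  have hfinP : (Γmap ⁻¹' C).Finite := Set.Finite.preimage (Γinj.injOn) hfinC
  refine ⟨⟨hfinP, ?_, ?_⟩, ?_, ?_⟩
  · rw [hset]
    exact Set.encard_pair hpzw
  · intro x hx hnend
    have hxC : Γmap x ∈ C := hx
    have hEx : (AdjSet (Γmap x) ∩ C).encard =
        if m ⟨Γmap x, hxC⟩ = a ∨ m ⟨Γmap x, hxC⟩ = b then 1 else 2 := hE ⟨Γmap x, hxC⟩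
    rw [hnbrs x hxC, hEx,
      if_neg (fun hcon => hnend ((hend x).mpr ((hclass ⟨Γmap x, hxC⟩).mp hcon)))]
  · intro p hp
    exact (hend p).mpr (Or.inl hp)
  · intro p hp
    exact (hend p).mpr (Or.inr hp)
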